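/- arXiv:2307.04190 — 4 statements merged into one kernel-verified Lean document; each statement's English description precedes it below -/
import Mathlib

section
/- Let s,t be positive integers and ε an n×n integer antisymmetric matrix. Let l ∈ ℤ^n, a ∈ ℤ^n be such that for every i, l_i/s + (t/s)(-a_i) + (1/s)(ε(-a))_i ∈ ℤ (i.e. (l,-a) solves the twist equation). Then for all m, m' ∈ ℤ^n there exist N, M ∈ ℤ^n with N/(2s) + εN/(2st) + M/(2t) = m + l/(2st) and N/(2s) - εN/(2st) - M/(2t) = m' + (-l + 2ta)/(2st). -/
open Matrix

theorem exists_NM_of_twist_solution (n s t : ℕ) (hs : 0 < s) (ht : 0 < t)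
    (ε : Matrix (Fin n) (Fin n) ℤ) (hε : εᵀ = -ε)
    (l a : Fin n → ℤ)
    (htwist : ∀ i, ∃ z : ℤ,
      (l i : ℚ) / s + ((t : ℚ) / s) * (-(a i : ℚ)) +
        (1 / (s : ℚ)) * ((ε.map (Int.cast : ℤ → ℚ)).mulVec (fun j => -(a j : ℚ))) i = z) :
    ∀ m m' : Fin n → ℤ, ∃ N M : Fin n → ℤ,
      (∀ i, (N i : ℚ) / (2 * s) +
          ((ε.map (Int.cast : ℤ → ℚ)).mulVec (fun j => (N j : ℚ))) i / (2 * s * t) +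
          (M i : ℚ) / (2 * t) = (m i : ℚ) + (l i : ℚ) / (2 * s * t)) ∧
      (∀ i, (N i : ℚ) / (2 * s) -
          ((ε.map (Int.cast : ℤ → ℚ)).mulVec (fun j => (N j : ℚ))) i / (2 * s * t) -
          (M i : ℚ) / (2 * t) = (m' i : ℚ) + (-(l i : ℚ) + 2 * t * (a i : ℚ)) / (2 * s * t)) := by
  intro m m'
  choose z hz using htwist
  have hsQ : (s : ℚ) ≠ 0 := by exact_mod_cast hs.ne'
  have htQ : (t : ℚ) ≠ 0 := by exact_mod_cast ht.ne'
  have hεe : ∀ i j, (ε j i : ℚ) = -(ε i j : ℚ) := by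
    intro i j
    have := congrFun (congrFun hε i) j
    simp only [Matrix.transpose_apply, Matrix.neg_apply] at this
    exact_mod_cast this
  -- key fact from twist hypothesis: ∑ j ε i j * a j = l i - t * a i - s * z i (over ℚ)
  have key : ∀ i, ∑ j, (ε i j : ℚ) * (a j : ℚ)
      = (l i : ℚ) - (t : ℚ) * (a i : ℚ) - (s : ℚ) * (z i : ℚ) := by
    intro i
    have h := hz i
    simp only [Matrix.mulVec, dotProduct, Matrix.map_apply] at h
    have hsum : ∑ j, (ε i j : ℚ) * (-(a j : ℚ)) = -∑ j, (ε i j : ℚ) * (a j : ℚ) := by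
      rw [← Finset.sum_neg_distrib]
      exact Finset.sum_congr rfl fun j _ => by ring
    rw [hsum] at h
    field_simp at h
    linarith [h]
  refine ⟨fun i => s * (m i + m' i) + a i,
    fun i => t * (m i - m' i) + (∑ j, ε j i * (m j + m' j)) + z i, ?_, ?_⟩ <;>
  · intro i
    simp only [Matrix.mulVec, dotProduct, Matrix.map_apply]
    push_cast
    have expand : ∑ j, (ε i j : ℚ) * ((s : ℚ) * ((m j : ℚ) + (m' j : ℚ)) + (a j : ℚ))
        = (s : ℚ) * ∑ j, (ε i j : ℚ) * ((m j : ℚ) + (m' j : ℚ))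
          + ∑ j, (ε i j : ℚ) * (a j : ℚ) := by
      rw [Finset.mul_sum, ← Finset.sum_add_distrib]
      exact Finset.sum_congr rfl fun j _ => by ring
    have hT : ∑ j, (ε j i : ℚ) * ((m j : ℚ) + (m' j : ℚ))
        = -∑ j, (ε i j : ℚ) * ((m j : ℚ) + (m' j : ℚ)) := by
      rw [← Finset.sum_neg_distrib]
      exact Finset.sum_congr rfl fun j _ => by rw [hεe i j]; ring
    rw [expand, key i, hT]
    field_simp
    ring
end

section
/- Let s,t,ε be as above with ε antisymmetric over ℤ. Define U = { (N/(2s)+εN/(2st)+M/(2t), N/(2s)-εN/(2st)-M/(2t)) : N,M ∈ ℤ^n } and V = { (m + l/(2st), m' + (-l+2ta)/(2st)) : m,m' ∈ ℤ^n, (l,-a) a solution of the twist equation r/s + (tI/s + ε/s)β ≡ 0 mod ℤ^n with l ∈ (ℤ ∩ [0,2st))^n, a ∈ ℤ^n }. Then U = V as subsets of ℚ^n × ℚ^n. -/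
open Matrix

private lemma castMulVec {n : ℕ} (A : Matrix (Fin n) (Fin n) ℤ) (v : Fin n → ℤ) (i : Fin n) :
    (A.map (Int.cast : ℤ → ℚ)).mulVec (fun j => (v j : ℚ)) i = ((A.mulVec v) i : ℚ) := by
  simp [Matrix.mulVec, dotProduct]

theorem U_eq_V (n s t : ℕ) (hs : 0 < s) (ht : 0 < t)
    (ε : Matrix (Fin n) (Fin n) ℤ) (hε : εᵀ = -ε) :
    {p : (Fin n → ℚ) × (Fin n → ℚ) | ∃ N M : Fin n → ℤ,
      p = ((fun i => (N i : ℚ) / (2 * s) +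
              ((ε.map (Int.cast : ℤ → ℚ)).mulVec (fun j => (N j : ℚ))) i / (2 * s * t) +
              (M i : ℚ) / (2 * t)),
           (fun i => (N i : ℚ) / (2 * s) -
              ((ε.map (Int.cast : ℤ → ℚ)).mulVec (fun j => (N j : ℚ))) i / (2 * s * t) -
              (M i : ℚ) / (2 * t)))}
    =
    {p : (Fin n → ℚ) × (Fin n → ℚ) | ∃ m m' l a : Fin n → ℤ,
      (∀ i, 0 ≤ l i ∧ l i < 2 * s * t) ∧
      (∀ i, ∃ z : ℤ,
        (l i : ℚ) / s + ((t : ℚ) / s) * (-(a i : ℚ)) +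
          (1 / (s : ℚ)) * ((ε.map (Int.cast : ℤ → ℚ)).mulVec (fun j => -(a j : ℚ))) i = z) ∧
      p = ((fun i => (m i : ℚ) + (l i : ℚ) / (2 * s * t)),
           (fun i => (m' i : ℚ) + (-(l i : ℚ) + 2 * t * (a i : ℚ)) / (2 * s * t)))} := by
  have hsQ : (s : ℚ) ≠ 0 := by positivity
  have htQ : (t : ℚ) ≠ 0 := by positivity
  ext p
  simp only [Set.mem_setOf_eq]
  constructor
  · rintro ⟨N, M, rfl⟩
    set S : ℤ := 2 * s * t with hS
    have hS0 : 0 < S := by positivity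
    set L : Fin n → ℤ := fun i => t * N i + ε.mulVec N i + s * M i with hL
    have hmod : ∀ i, ((L i % S : ℤ) : ℚ) = (L i : ℚ) - (S : ℚ) * ((L i / S : ℤ) : ℚ) := by
      intro i
      rw [Int.emod_def]
      push_cast
      ring
    have hSQ : (S : ℚ) = 2 * s * t := by push_cast [hS]; ring
    refine ⟨fun i => L i / S, fun i => -(L i / S), fun i => L i % S, N, ?_, ?_, ?_⟩
    · intro i
      exact ⟨Int.emod_nonneg _ hS0.ne', Int.emod_lt_of_pos _ hS0⟩
    · intro i
      refine ⟨M i - 2 * t * (L i / S), ?_⟩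
      have hcast : ((ε.map (Int.cast : ℤ → ℚ)).mulVec (fun j => -(N j : ℚ))) i
          = -((ε.mulVec N) i : ℚ) := by
        have : (fun j => -(N j : ℚ)) = fun j => (((-N) j : ℤ) : ℚ) := by
          funext j; simp
        rw [this, castMulVec, Matrix.mulVec_neg]
        simp
      rw [hcast, hmod i]
      field_simp
      push_cast [hL, hSQ]
      ring
    · have hε' : ∀ i, ((ε.map (Int.cast : ℤ → ℚ)).mulVec (fun j => (N j : ℚ))) i
          = ((ε.mulVec N) i : ℚ) := castMulVec ε N
      refine Prod.ext ?_ ?_ <;> funext i <;>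
        simp only [hε', hmod i] <;> rw [hSQ] <;> push_cast [hL] <;> field_simp <;> ring
  · rintro ⟨m, m', l, a, hl, htw, rfl⟩
    choose z hz using htw
    have hcast : ∀ i, ((ε.map (Int.cast : ℤ → ℚ)).mulVec (fun j => -(a j : ℚ))) i
        = -((ε.mulVec a) i : ℚ) := by
      intro i
      have : (fun j => -(a j : ℚ)) = fun j => (((-a) j : ℤ) : ℚ) := by
        funext j; simp
      rw [this, castMulVec, Matrix.mulVec_neg]
      simp
    have hzi : ∀ i, (l i : ℚ) = (t : ℚ) * a i + ((ε.mulVec a) i : ℚ) + (s : ℚ) * z i := by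
      intro i
      have h := hz i
      rw [hcast i] at h
      field_simp at h
      linarith [h]
    set k : Fin n → ℤ := fun i => m' i + m i with hk
    refine ⟨fun i => a i + s * k i, fun i => 2 * t * m i + z i - t * k i - (ε.mulVec k) i, ?_⟩
    have hmv : ∀ i, ((ε.map (Int.cast : ℤ → ℚ)).mulVec (fun j => ((a j + s * k j : ℤ) : ℚ))) i
        = ((ε.mulVec a) i : ℚ) + (s : ℚ) * ((ε.mulVec k) i : ℚ) := by
      intro i
      rw [castMulVec]
      have : ε.mulVec (fun j => a j + (s : ℤ) * k j) = ε.mulVec a + (s : ℤ) • ε.mulVec k := by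
        have : (fun j => a j + (s : ℤ) * k j) = a + (s : ℤ) • k := by
          funext j; simp [mul_comm]
        rw [this, Matrix.mulVec_add, Matrix.mulVec_smul]
      rw [this]
      simp only [Pi.add_apply, Pi.smul_apply, smul_eq_mul]
      push_cast
      ring
    refine Prod.ext ?_ ?_ <;> funext i <;> simp only [hmv] <;> push_cast <;>
      rw [hzi i] <;> field_simp
    all_goals (simp only [hk]; push_cast; ring)
end

section
/- Let C ⊆ 𝔽_p^{2n} be a self-dual code with respect to the form g = [[0,I],[I,0]] (i.e. C = C^⊥ where C^⊥ = {c' : c g c'^T = 0 for all c ∈ C}). Then the Construction A lattice Λ_C is self-dual with respect to the Lorentzian form ⟨(x,y),(x',y')⟩ = x·y' + y·x': Λ_C = Λ_C^*, where Λ_C^* = { w ∈ ℝ^{2n} : ⟨v,w⟩ ∈ ℤ for all v ∈ Λ_C }. -/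
/-!
Write `B` for the split form `x·y' + y·x'` over any commutative ring. The lattice is
`Λ = p^{-1/2} L` with `L = {z ∈ ℤ^{2n} | z mod p ∈ C}`, and `B(z/√p, z'/√p) = B(z, z')/p`, so two
vectors of `Λ` pair integrally iff `B(z mod p, z' mod p) = 0` in `𝔽_p`; hence `C ⊆ C^⊥` gives
`Λ ⊆ Λ^*`. Conversely `Λ ⊇ √p ℤ^{2n}`, so any `w ∈ Λ^*` has `√p w` integral, i.e. `w = z'/√p`,
and integrality against all of `Λ` says `z' mod p ∈ C^⊥ ⊆ C`.
-/

open Matrix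

/-- The Lorentzian pairing ⟨(x,y),(x',y')⟩ = x·y' + y·x' on ℝ^n × ℝ^n. -/
def lorentzPair {n : ℕ} (v w : (Fin n → ℝ) × (Fin n → ℝ)) : ℝ :=
  ∑ i, (v.1 i * w.2 i + v.2 i * w.1 i)

namespace ConstructionA

variable {ι : Type*}

def splitForm [Fintype ι] {R : Type*} [CommSemiring R] (x y : (ι → R) × (ι → R)) : R :=
  ∑ i, (x.1 i * y.2 i + x.2 i * y.1 i)

def pairMap {R S : Type*} [Semiring R] [Semiring S] (f : R →+* S) (x : (ι → R) × (ι → R)) :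
    (ι → S) × (ι → S) :=
  (fun i => f (x.1 i), fun i => f (x.2 i))

section pairMap

variable {R S : Type*} [Semiring R] [Semiring S] {f : R →+* S}

theorem pairMap_smul (a : R) (x : (ι → R) × (ι → R)) :
    pairMap f (a • x) = f a • pairMap f x := by
  ext i <;> simp [pairMap]

theorem pairMap_surjective (hf : Function.Surjective f) :
    Function.Surjective (pairMap (ι := ι) f) := by
  intro y
  choose g hg using hf
  exact ⟨(fun i => g (y.1 i), fun i => g (y.2 i)), by simp [pairMap, hg]⟩

end pairMap

section splitForm

variable [Fintype ι] {R S : Type*} [CommSemiring R] [CommSemiring S]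

theorem splitForm_pairMap (f : R →+* S) (x y : (ι → R) × (ι → R)) :
    splitForm (pairMap f x) (pairMap f y) = f (splitForm x y) := by
  simp [splitForm, pairMap, map_sum]

theorem splitForm_smul_left (a : R) (x y : (ι → R) × (ι → R)) :
    splitForm (a • x) y = a * splitForm x y := by
  simp only [splitForm, Prod.smul_fst, Prod.smul_snd, Pi.smul_apply, smul_eq_mul, Finset.mul_sum]
  exact Finset.sum_congr rfl fun _ _ => by ring

theorem splitForm_smul_right (a : R) (x y : (ι → R) × (ι → R)) :
    splitForm x (a • y) = a * splitForm x y := by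
  simp only [splitForm, Prod.smul_fst, Prod.smul_snd, Pi.smul_apply, smul_eq_mul, Finset.mul_sum]
  exact Finset.sum_congr rfl fun _ _ => by ring

theorem splitForm_smul_smul (a : R) (x y : (ι → R) × (ι → R)) :
    splitForm (a • x) (a • y) = a * a * splitForm x y := by
  rw [splitForm_smul_left, splitForm_smul_right, mul_assoc]

theorem splitForm_zero_right (x : (ι → R) × (ι → R)) : splitForm x 0 = 0 := by
  simp [splitForm]

end splitForm

theorem exists_intCast_eq_div_iff {p : ℕ} (hp : p ≠ 0) (m : ℤ) :
    (∃ k : ℤ, (m : ℝ) / p = k) ↔ (p : ℤ) ∣ m := by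
  constructor
  · rintro ⟨k, hk⟩
    refine ⟨k, ?_⟩
    rw [div_eq_iff (by exact_mod_cast hp)] at hk
    exact_mod_cast hk.trans (mul_comm _ _)
  · rintro ⟨k, rfl⟩
    exact ⟨k, by push_cast; field_simp⟩

variable (p : ℕ)

abbrev reduceMod : (ι → ℤ) × (ι → ℤ) → (ι → ZMod p) × (ι → ZMod p) :=
  pairMap (Int.castRingHom (ZMod p))

noncomputable abbrev embed (z : (ι → ℤ) × (ι → ℤ)) : (ι → ℝ) × (ι → ℝ) :=
  (√(p : ℝ))⁻¹ • pairMap (Int.castRingHom ℝ) z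

def lattice (C : Set ((ι → ZMod p) × (ι → ZMod p))) : Set ((ι → ℝ) × (ι → ℝ)) :=
  {v | ∃ c ∈ C, ∃ k₁ k₂ : ι → ℤ,
    v = ((fun i => (((c.1 i).val : ℝ) + p * k₁ i) / Real.sqrt p),
         (fun i => (((c.2 i).val : ℝ) + p * k₂ i) / Real.sqrt p))}

variable {p}

theorem splitForm_embed [Fintype ι] (z z' : (ι → ℤ) × (ι → ℤ)) :
    splitForm (embed p z) (embed p z') = ((splitForm z z' : ℤ) : ℝ) / p := by
  rw [splitForm_smul_smul, splitForm_pairMap, ← mul_inv, Real.mul_self_sqrt (Nat.cast_nonneg p),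
    inv_mul_eq_div]
  rfl

def dual [Fintype ι] (Λ : Set ((ι → ℝ) × (ι → ℝ))) : Set ((ι → ℝ) × (ι → ℝ)) :=
  {w | ∀ v ∈ Λ, ∃ k : ℤ, splitForm v w = k}

variable [NeZero p] {C : Set ((ι → ZMod p) × (ι → ZMod p))}

theorem val_intCast_add_mul_ediv (a : ℤ) : ((a : ZMod p).val : ℤ) + p * (a / p) = a := by
  rw [ZMod.val_intCast, Int.emod_add_mul_ediv]

theorem mem_lattice_iff {v : (ι → ℝ) × (ι → ℝ)} :
    v ∈ lattice p C ↔ ∃ z, reduceMod p z ∈ C ∧ v = embed p z := by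
  constructor
  · rintro ⟨c, hc, k₁, k₂, rfl⟩
    refine ⟨(fun i => (c.1 i).val + p * k₁ i, fun i => (c.2 i).val + p * k₂ i), ?_, ?_⟩
    · convert hc using 1
      simp [pairMap]
    · ext i <;> simp [pairMap, div_eq_inv_mul]
  · rintro ⟨z, hz, rfl⟩
    refine ⟨_, hz, fun i => z.1 i / p, fun i => z.2 i / p, ?_⟩
    have hlift (a : ℤ) : ((a : ZMod p).val : ℝ) + p * (a / p : ℤ) = a := by
      exact_mod_cast val_intCast_add_mul_ediv a
    ext i <;> simp only [embed, pairMap, Int.coe_castRingHom, Prod.smul_fst, Prod.smul_snd,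
      Pi.smul_apply, smul_eq_mul, hlift, inv_mul_eq_div]

theorem sqrt_smul_mem_lattice (h0 : 0 ∈ C) (z : (ι → ℤ) × (ι → ℤ)) :
    √(p : ℝ) • pairMap (Int.castRingHom ℝ) z ∈ lattice p C := by
  refine mem_lattice_iff.2 ⟨(p : ℤ) • z, ?_, ?_⟩
  · convert h0
    ext i <;> simp [pairMap]
  · rw [embed, pairMap_smul, smul_smul, eq_intCast, Int.cast_natCast, inv_mul_eq_div,
      Real.div_sqrt]

variable [Fintype ι]

theorem splitForm_embed_isInt_iff (z z' : (ι → ℤ) × (ι → ℤ)) :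
    (∃ k : ℤ, splitForm (embed p z) (embed p z') = k) ↔
      splitForm (reduceMod p z) (reduceMod p z') = 0 := by
  rw [splitForm_embed, exists_intCast_eq_div_iff (NeZero.ne p), splitForm_pairMap, eq_intCast,
    ZMod.intCast_zmod_eq_zero_iff_dvd]

theorem lattice_subset_dual (hC : ∀ c ∈ C, ∀ c' ∈ C, splitForm c c' = 0) :
    lattice p C ⊆ dual (lattice p C) := by
  intro w hw v hv
  obtain ⟨z', hz', rfl⟩ := mem_lattice_iff.1 hw
  obtain ⟨z, hz, rfl⟩ := mem_lattice_iff.1 hv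
  exact (splitForm_embed_isInt_iff z z').2 (hC _ hz _ hz')

-- Pairing `w` with the vectors `√p eⱼ` of `Λ` shows that `√p w` is integral.
theorem exists_eq_embed_of_mem_dual (h0 : 0 ∈ C) {w : (ι → ℝ) × (ι → ℝ)}
    (hw : w ∈ dual (lattice p C)) : ∃ z, w = embed p z := by
  classical
  have hsp : √(p : ℝ) ≠ 0 := Real.sqrt_ne_zero'.2 (by exact_mod_cast Nat.pos_of_neZero p)
  have hint₁ (j : ι) : ∃ k : ℤ, √(p : ℝ) * w.1 j = k := by
    obtain ⟨k, hk⟩ := hw _ (sqrt_smul_mem_lattice h0 (0, Pi.single j 1))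
    refine ⟨k, ?_⟩
    rw [← hk, splitForm_smul_left]
    simp [splitForm, pairMap, Pi.single_apply]
  have hint₂ (j : ι) : ∃ k : ℤ, √(p : ℝ) * w.2 j = k := by
    obtain ⟨k, hk⟩ := hw _ (sqrt_smul_mem_lattice h0 (Pi.single j 1, 0))
    refine ⟨k, ?_⟩
    rw [← hk, splitForm_smul_left]
    simp [splitForm, pairMap, Pi.single_apply]
  choose k₁ hk₁ using hint₁
  choose k₂ hk₂ using hint₂
  refine ⟨(k₁, k₂), ?_⟩
  ext j <;> simp [pairMap, ← hk₁, ← hk₂, hsp]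

theorem reduceMod_mem_orthogonal_of_mem_dual (z' : (ι → ℤ) × (ι → ℤ))
    (hw : embed p z' ∈ dual (lattice p C)) :
    ∀ c ∈ C, splitForm c (reduceMod p z') = 0 := by
  intro c hc
  obtain ⟨z, rfl⟩ := pairMap_surjective (f := Int.castRingHom (ZMod p)) ZMod.intCast_surjective c
  exact (splitForm_embed_isInt_iff z z').1 (hw _ (mem_lattice_iff.2 ⟨z, hc, rfl⟩))

theorem dual_subset_lattice (hC : ∀ c', (∀ c ∈ C, splitForm c c' = 0) → c' ∈ C) :
    dual (lattice p C) ⊆ lattice p C := by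
  intro w hw
  obtain ⟨z', rfl⟩ := exists_eq_embed_of_mem_dual (hC 0 fun c _ => splitForm_zero_right c) hw
  exact mem_lattice_iff.2 ⟨z', hC _ (reduceMod_mem_orthogonal_of_mem_dual z' hw), rfl⟩

end ConstructionA

theorem constructionA_self_dual (p n : ℕ) [Fact p.Prime]
    (C : Set ((Fin n → ZMod p) × (Fin n → ZMod p)))
    -- C is self-dual: C = C^⊥ with respect to g = [[0,I],[I,0]]
    (hC : C = {c' | ∀ c ∈ C, (∑ i, (c.1 i * c'.2 i + c.2 i * c'.1 i)) = 0}) :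
    let Λ : Set ((Fin n → ℝ) × (Fin n → ℝ)) :=
      {v | ∃ c ∈ C, ∃ k₁ k₂ : Fin n → ℤ,
        v = ((fun i => (((c.1 i).val : ℝ) + p * k₁ i) / Real.sqrt p),
             (fun i => (((c.2 i).val : ℝ) + p * k₂ i) / Real.sqrt p))}
    Λ = {w | ∀ v ∈ Λ, ∃ z : ℤ, lorentzPair v w = z} := by
  intro Λ
  change ConstructionA.lattice p C = ConstructionA.dual (ConstructionA.lattice p C)
  have hself : ∀ c', c' ∈ C ↔ ∀ c ∈ C, ConstructionA.splitForm c c' = 0 :=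
    fun c' => Set.ext_iff.1 hC c'
  exact (ConstructionA.lattice_subset_dual fun c hc c' hc' => (hself c').1 hc' c hc).antisymm
    (ConstructionA.dual_subset_lattice fun c' => (hself c').2)
end

section
/- Let d₁,…,d_n be positive integers, L = lcm(d₁,…,d_n), and C an additive subgroup of (ℤ_{d₁}×…×ℤ_{d_n})². Write elements as (α,β). If for all (α,β),(α',β') ∈ C one has Σ_i (L/d_i)(α_i β'_i + α'_i β_i) ≡ 0 mod L, then the Construction A lattice { ((α_i + d_i k_i)/√d_i)_i , ((β_i + d_i k'_i)/√d_i)_i : (α,β) ∈ C, k,k' ∈ ℤ^n } is integral with respect to the Lorentzian form ⟨(x,y),(x',y')⟩ = x·y' + y·x', i.e. all pairings of lattice vectors lie in ℤ. -/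
/-!
Each coordinate of the Lorentzian pairing of two Construction A vectors is
`((α + d k)(β' + d l') + (β + d k')(α' + d l)) / d = (α β' + α' β) / d + (integer)`,
so the pairing is an integer up to `∑ᵢ (αᵢ β'ᵢ + α'ᵢ βᵢ) / dᵢ`. Putting this sum over the common
denominator `L = lcm dᵢ` gives `(∑ᵢ (L / dᵢ)(αᵢ β'ᵢ + α'ᵢ βᵢ)) / L`, an integer by hypothesis.
-/

open Finset

lemma div_sqrt_mul_div_sqrt {d : ℝ} (hd : 0 ≤ d) (x y : ℝ) :
    x / √d * (y / √d) = x * y / d := by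
  rw [div_mul_div_comm, Real.mul_self_sqrt hd]

lemma add_mul_mul_add_mul_div {K : Type*} [Field K] {d : K} (hd : d ≠ 0) (x y k l : K) :
    (x + d * k) * (y + d * l) / d = x * y / d + (x * l + k * y + d * k * l) := by
  field_simp
  ring

lemma sum_div_eq_sum_mul_div_of_dvd {ι K : Type*} [Field K] [CharZero K] (s : Finset ι)
    (d : ι → ℕ) {L : ℕ} (hL : L ≠ 0) (hdvd : ∀ i ∈ s, d i ∣ L) (A : ι → ℤ) :
    ∑ i ∈ s, (A i : K) / d i = ((∑ i ∈ s, ((L / d i : ℕ) : ℤ) * A i : ℤ) : K) / L := by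
  rw [eq_div_iff (Nat.cast_ne_zero.mpr hL), sum_mul, Int.cast_sum]
  refine sum_congr rfl fun i hi => ?_
  have hdi : (d i : K) ≠ 0 := Nat.cast_ne_zero.mpr (ne_zero_of_dvd_ne_zero hL (hdvd i hi))
  rw [Int.cast_mul, Int.cast_natCast, Nat.cast_div (hdvd i hi) hdi]
  field_simp

lemma shifted_pairing_div_sqrt {d : ℕ} (hd : d ≠ 0) (a b a' b' : ℕ) (k k' l l' : ℤ) :
    (a + d * k) / √d * ((b' + d * l') / √d) + (b + d * k') / √d * ((a' + d * l) / √d)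
      = ((a * b' + a' * b : ℤ) : ℝ) / d
        + ((a * l' + k * b' + d * k * l' + (b * l + k' * a' + d * k' * l) : ℤ) : ℝ) := by
  have hd' : (d : ℝ) ≠ 0 := Nat.cast_ne_zero.mpr hd
  rw [div_sqrt_mul_div_sqrt (Nat.cast_nonneg _), div_sqrt_mul_div_sqrt (Nat.cast_nonneg _),
    add_mul_mul_add_mul_div hd', add_mul_mul_add_mul_div hd']
  push_cast
  ring

theorem nonhomogeneous_constructionA_integral (n : ℕ) (d : Fin n → ℕ)
    (hd : ∀ i, 0 < d i)
    (C : Set ((∀ i, ZMod (d i)) × (∀ i, ZMod (d i))))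
    (L : ℕ) (hL : L = Finset.univ.lcm d)
    (hC : ∀ c ∈ C, ∀ c' ∈ C,
      (L : ℤ) ∣ ∑ i, (L / d i : ℕ) *
        (((c.1 i).val : ℤ) * ((c'.2 i).val : ℤ) + ((c'.1 i).val : ℤ) * ((c.2 i).val : ℤ))) :
    let Λ : Set ((Fin n → ℝ) × (Fin n → ℝ)) :=
      {v | ∃ c ∈ C, ∃ k k' : Fin n → ℤ,
        v = ((fun i => (((c.1 i).val : ℝ) + d i * k i) / Real.sqrt (d i)),
             (fun i => (((c.2 i).val : ℝ) + d i * k' i) / Real.sqrt (d i)))}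
    ∀ v ∈ Λ, ∀ w ∈ Λ, ∃ z : ℤ,
      (∑ i, (v.1 i * w.2 i + v.2 i * w.1 i)) = z := by
  intro Λ v hv w hw
  obtain ⟨c, hc, k, k', rfl⟩ := hv
  obtain ⟨c', hc', l, l', rfl⟩ := hw
  obtain ⟨m, hm⟩ := hC c hc c' hc'
  have hdvd : ∀ i ∈ univ, d i ∣ L := fun i hi => hL ▸ dvd_lcm hi
  have hL0 : L ≠ 0 := hL ▸ lcm_ne_zero_iff.mpr fun i _ => (hd i).ne'
  refine ⟨m + ∑ i, ((c.1 i).val * l' i + k i * (c'.2 i).val + d i * k i * l' i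
    + ((c.2 i).val * l i + k' i * (c'.1 i).val + d i * k' i * l i)), ?_⟩
  rw [sum_congr rfl fun i _ => shifted_pairing_div_sqrt (hd i).ne' _ _ _ _ _ _ _ _,
    sum_add_distrib, sum_div_eq_sum_mul_div_of_dvd univ d hL0 hdvd, hm]
  push_cast
  field_simp
end
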